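/- arXiv:2512.16353 — 4 statements merged into one kernel-verified Lean document; each statement's English description precedes it below -/
import Mathlib

section
/- Let ε > 0 and let φ : ℝ³ → ℝ be Lebesgue measurable. Then ∫_{ℝ³} ∫_{(0,1)³} |T_ε(φ)(x,y)|² dy dx = ∫_{ℝ³} |φ(x)|² dx, where T_ε(φ)(x,y) = φ(ε⌊x/ε⌋ + εy) (in particular, the unfolding operator preserves the L² norm on ℝ³ × Y with Y = (0,1)³, both sides being allowed to equal +∞). -/
open MeasureTheory

/-- The point ε⌊x/ε⌋ + εy of the periodic unfolding. -/
noncomputable def unfoldPt (ε : ℝ) (x y : Fin 3 → ℝ) : Fin 3 → ℝ :=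
  fun i => ε * (⌊x i / ε⌋ : ℝ) + ε * y i

/-- The periodic unfolding operator T_ε(φ)(x,y) = φ(ε⌊x/ε⌋ + εy). -/
noncomputable def unfold (ε : ℝ) (φ : (Fin 3 → ℝ) → ℝ) (x y : Fin 3 → ℝ) : ℝ :=
  φ (unfoldPt ε x y)

/-- The open unit cell Y = (0,1)³. -/
def unitCube : Set (Fin 3 → ℝ) := Set.univ.pi fun _ => Set.Ioo (0 : ℝ) 1

/-- The affine map y ↦ εk + εy. -/
noncomputable def Tmap (ε : ℝ) (k : Fin 3 → ℤ) (y : Fin 3 → ℝ) : Fin 3 → ℝ :=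
  fun i => ε * (k i : ℝ) + ε * y i

/-- The half-open cell εk + [0,ε)³. -/
def cellI (ε : ℝ) (k : Fin 3 → ℤ) : Set (Fin 3 → ℝ) :=
  Set.univ.pi fun i => Set.Ico (ε * k i) (ε * k i + ε)

/-- The open cell εk + (0,ε)³. -/
def cellO (ε : ℝ) (k : Fin 3 → ℤ) : Set (Fin 3 → ℝ) :=
  Set.univ.pi fun i => Set.Ioo (ε * k i) (ε * k i + ε)

lemma mem_cellI {ε : ℝ} (hε : 0 < ε) {k : Fin 3 → ℤ} {x : Fin 3 → ℝ} :
    x ∈ cellI ε k ↔ ∀ i, ⌊x i / ε⌋ = k i := by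
  simp only [cellI, Set.mem_pi, Set.mem_univ, forall_true_left, Set.mem_Ico]
  refine forall_congr' fun i => ?_
  rw [Int.floor_eq_iff, div_lt_iff₀ hε, le_div_iff₀ hε]
  constructor
  · rintro ⟨h1, h2⟩; constructor <;> nlinarith
  · rintro ⟨h1, h2⟩; constructor <;> nlinarith

lemma measurable_cellI (ε : ℝ) (k : Fin 3 → ℤ) : MeasurableSet (cellI ε k) :=
  MeasurableSet.univ_pi fun _ => measurableSet_Ico

lemma iUnion_cellI {ε : ℝ} (hε : 0 < ε) : (⋃ k, cellI ε k) = Set.univ := by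
  ext x
  simp only [Set.mem_iUnion, Set.mem_univ, iff_true]
  exact ⟨fun i => ⌊x i / ε⌋, (mem_cellI hε).2 fun i => rfl⟩

lemma disjoint_cellI {ε : ℝ} (hε : 0 < ε) : Pairwise (Function.onFun Disjoint (cellI ε)) := by
  intro k k' hkk'
  refine Set.disjoint_left.2 fun x hx hx' => hkk' ?_
  funext i
  rw [← (mem_cellI hε).1 hx i, (mem_cellI hε).1 hx' i]

lemma vol_cellI {ε : ℝ} (hε : 0 < ε) (k : Fin 3 → ℤ) :
    volume (cellI ε k) = ENNReal.ofReal (ε ^ 3) := by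
  rw [cellI, volume_pi_pi]
  simp [Real.volume_Ico, ← ENNReal.ofReal_pow hε.le]

lemma vol_cellO {ε : ℝ} (hε : 0 < ε) (k : Fin 3 → ℤ) :
    volume (cellO ε k) = ENNReal.ofReal (ε ^ 3) := by
  rw [cellO, volume_pi_pi]
  simp [Real.volume_Ioo, ← ENNReal.ofReal_pow hε.le]

lemma cellI_ae_eq_cellO {ε : ℝ} (hε : 0 < ε) (k : Fin 3 → ℤ) :
    cellI ε k =ᵐ[volume] cellO ε k := by
  refine (ae_eq_of_subset_of_measure_ge ?_ ?_ ?_ ?_).symm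
  · exact Set.pi_mono fun i _ => Set.Ioo_subset_Ico_self
  · rw [vol_cellI hε, vol_cellO hε]
  · exact ((MeasurableSet.univ_pi fun _ => measurableSet_Ioo)).nullMeasurableSet
  · rw [vol_cellI hε]; exact ENNReal.ofReal_ne_top

lemma Tmap_image {ε : ℝ} (hε : 0 < ε) (k : Fin 3 → ℤ) :
    Tmap ε k '' unitCube = cellO ε k := by
  ext z
  simp only [Set.mem_image, unitCube, cellO, Set.mem_pi, Set.mem_univ, forall_true_left,
    Set.mem_Ioo, Tmap]
  constructor
  · rintro ⟨y, hy, rfl⟩ i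
    simp only [Tmap]
    constructor <;> nlinarith [(hy i).1, (hy i).2]
  · intro hz
    refine ⟨fun i => (z i - ε * k i) / ε, fun i => ?_, ?_⟩
    · constructor
      · exact div_pos (by linarith [(hz i).1]) hε
      · rw [div_lt_one hε]; linarith [(hz i).2]
    · funext i
      simp only [Tmap]
      rw [mul_comm ε ((z i - ε * k i) / ε), div_mul_cancel₀ _ hε.ne']
      ring

open scoped ENNReal

lemma lintegral_cellO {ε : ℝ} (hε : 0 < ε) (k : Fin 3 → ℤ) (g : (Fin 3 → ℝ) → ℝ≥0∞) :
    ∫⁻ z in cellO ε k, g z = ENNReal.ofReal (ε ^ 3) * ∫⁻ y in unitCube, g (Tmap ε k y) := by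
  have hmeas : MeasurableSet unitCube := MeasurableSet.univ_pi fun _ => measurableSet_Ioo
  have hTfun : Tmap ε k = fun y : Fin 3 → ℝ => (fun i => ε * (k i : ℝ)) + ε • y := by
    funext y i
    simp [Tmap, Pi.smul_apply, smul_eq_mul]
  have hderiv : ∀ y ∈ unitCube, HasFDerivWithinAt (Tmap ε k)
      (ε • ContinuousLinearMap.id ℝ (Fin 3 → ℝ)) unitCube y := by
    intro y _
    rw [hTfun]
    exact (((hasFDerivAt_id y).const_smul ε).const_add _).hasFDerivWithinAt
  have hinj : Set.InjOn (Tmap ε k) unitCube := by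
    intro a _ b _ hab
    funext i
    have h1 := congrFun hab i
    simp only [Tmap] at h1
    exact mul_left_cancel₀ hε.ne' (add_left_cancel h1)
  have hcv := lintegral_image_eq_lintegral_abs_det_fderiv_mul volume hmeas
    (f' := fun _ => ε • ContinuousLinearMap.id ℝ (Fin 3 → ℝ)) hderiv hinj g
  rw [Tmap_image hε] at hcv
  rw [hcv]
  have hdet : (ε • ContinuousLinearMap.id ℝ (Fin 3 → ℝ)).det = ε ^ 3 := by
    simp [ContinuousLinearMap.det, Module.finrank_fin_fun]
  simp only [hdet, abs_of_pos (pow_pos hε 3)]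
  rw [lintegral_const_mul' _ _ ENNReal.ofReal_ne_top]

/-- The unfolding operator preserves the L² norm:
∫_{ℝ³} ∫_Y |T_ε(φ)(x,y)|² dy dx = ∫_{ℝ³} |φ(x)|² dx. -/
theorem unfold_l2_norm_preserved (ε : ℝ) (hε : 0 < ε)
    (φ : (Fin 3 → ℝ) → ℝ) (hφ : Measurable φ) :
    ∫⁻ x : Fin 3 → ℝ, ∫⁻ y in unitCube,
        ENNReal.ofReal (|unfold ε φ x y| ^ 2) ∂volume ∂volume
      = ∫⁻ x : Fin 3 → ℝ, ENNReal.ofReal (|φ x| ^ 2) ∂volume := by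
  set g : (Fin 3 → ℝ) → ℝ≥0∞ := fun z => ENNReal.ofReal (|φ z| ^ 2) with hgdef
  rw [← setLIntegral_univ (fun x => ∫⁻ y in unitCube,
        ENNReal.ofReal (|unfold ε φ x y| ^ 2) ∂volume),
      ← setLIntegral_univ (fun x => ENNReal.ofReal (|φ x| ^ 2)),
      ← iUnion_cellI hε,
      lintegral_iUnion (measurable_cellI ε) (disjoint_cellI hε),
      lintegral_iUnion (measurable_cellI ε) (disjoint_cellI hε)]
  refine tsum_congr fun k => ?_
  have hconst : ∀ x ∈ cellI ε k,
      (∫⁻ y in unitCube, ENNReal.ofReal (|unfold ε φ x y| ^ 2) ∂volume)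
        = ∫⁻ y in unitCube, g (Tmap ε k y) ∂volume := by
    intro x hx
    have hk : (fun i => ⌊x i / ε⌋) = k := funext ((mem_cellI hε).1 hx)
    calc (∫⁻ y in unitCube, ENNReal.ofReal (|unfold ε φ x y| ^ 2) ∂volume)
        = ∫⁻ y in unitCube, g (Tmap ε (fun i => ⌊x i / ε⌋) y) ∂volume := rfl
      _ = ∫⁻ y in unitCube, g (Tmap ε k y) ∂volume := by rw [hk]
  rw [setLIntegral_congr_fun (measurable_cellI ε k) hconst,
      setLIntegral_const, vol_cellI hε,
      setLIntegral_congr (cellI_ae_eq_cellO hε k),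
      lintegral_cellO hε k g, mul_comm]
end

section
/- Let (φ_ε)_{ε>0} be a family of functions in L²(ℝ³) and let φ ∈ L²(ℝ³) be such that ‖φ_ε − φ‖_{L²(ℝ³)} → 0 as ε → 0⁺. Then ∫_{ℝ³} ∫_{(0,1)³} |T_ε(φ_ε)(x,y) − φ(x)|² dy dx → 0 as ε → 0⁺, i.e. the unfolded functions T_ε(φ_ε)(x,y) = φ_ε(ε⌊x/ε⌋ + εy) converge strongly to φ in L²(ℝ³ × (0,1)³). -/
open MeasureTheory Filter

open scoped ENNReal

lemma measurable_unfoldPt_right (ε : ℝ) (x : Fin 3 → ℝ) :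
    Measurable fun y : Fin 3 → ℝ => unfoldPt ε x y := by
  apply measurable_pi_lambda
  intro i
  show Measurable fun y : Fin 3 → ℝ => ε * (⌊x i / ε⌋ : ℝ) + ε * y i
  exact measurable_const.add (by fun_prop)

section helpers

lemma measurable_unfoldPt (ε : ℝ) :
    Measurable fun p : (Fin 3 → ℝ) × (Fin 3 → ℝ) => unfoldPt ε p.1 p.2 := by
  apply measurable_pi_lambda
  intro i
  have h1 : Measurable fun p : (Fin 3 → ℝ) × (Fin 3 → ℝ) => (⌊p.1 i / ε⌋ : ℝ) := by
    have : Measurable fun p : (Fin 3 → ℝ) × (Fin 3 → ℝ) => p.1 i / ε :=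
      by fun_prop
    exact (measurable_of_countable _).comp this.floor
  exact (h1.const_mul ε).add (by fun_prop)

def cellIco (ε : ℝ) (k : Fin 3 → ℤ) : Set (Fin 3 → ℝ) :=
  Set.univ.pi fun i => Set.Ico (ε * k i) (ε * (k i + 1))

def cellIoo (ε : ℝ) (k : Fin 3 → ℤ) : Set (Fin 3 → ℝ) :=
  Set.univ.pi fun i => Set.Ioo (ε * k i) (ε * (k i + 1))

lemma mem_cellIco_iff {ε : ℝ} (hε : 0 < ε) {k : Fin 3 → ℤ} {x : Fin 3 → ℝ} :
    x ∈ cellIco ε k ↔ ∀ i, ⌊x i / ε⌋ = k i := by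
  simp only [cellIco, Set.mem_pi, Set.mem_univ, forall_true_left, Set.mem_Ico]
  refine forall_congr' fun i => ?_
  rw [Int.floor_eq_iff]
  constructor
  · rintro ⟨h1, h2⟩
    constructor
    · rwa [le_div_iff₀ hε, mul_comm]
    · rw [div_lt_iff₀ hε]
      calc x i < ε * (k i + 1) := h2
        _ = (k i + 1) * ε := mul_comm _ _
  · rintro ⟨h1, h2⟩
    constructor
    · rwa [le_div_iff₀ hε, mul_comm] at h1
    · rw [div_lt_iff₀ hε] at h2
      calc x i < (k i + 1) * ε := by exact_mod_cast h2
        _ = ε * (k i + 1) := mul_comm _ _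

lemma iUnion_cellIco {ε : ℝ} (hε : 0 < ε) : (⋃ k : Fin 3 → ℤ, cellIco ε k) = Set.univ := by
  ext x
  simp only [Set.mem_iUnion, Set.mem_univ, iff_true]
  exact ⟨fun i => ⌊x i / ε⌋, (mem_cellIco_iff hε).2 fun i => rfl⟩

lemma pairwise_disjoint_cellIco {ε : ℝ} (hε : 0 < ε) :
    Pairwise (Function.onFun Disjoint fun k : Fin 3 → ℤ => cellIco ε k) := by
  intro k l hkl
  rw [Function.onFun, Set.disjoint_left]
  intro x hxk hxl
  apply hkl
  funext i
  rw [← (mem_cellIco_iff hε).1 hxk i, ← (mem_cellIco_iff hε).1 hxl i]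

lemma measurableSet_cellIco {ε : ℝ} {k : Fin 3 → ℤ} : MeasurableSet (cellIco ε k) :=
  MeasurableSet.univ_pi fun _ => measurableSet_Ico

lemma volume_cellIco {ε : ℝ} (hε : 0 < ε) (k : Fin 3 → ℤ) :
    volume (cellIco ε k) = ENNReal.ofReal ε ^ 3 := by
  rw [cellIco, volume_pi, Measure.pi_pi]
  have : ∀ i : Fin 3, volume (Set.Ico (ε * k i) (ε * (k i + 1))) = ENNReal.ofReal ε := by
    intro i
    rw [Real.volume_Ico]
    congr 1
    ring
  simp [this]

lemma cellIco_ae_eq_cellIoo {ε : ℝ} (k : Fin 3 → ℤ) :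
    cellIco ε k =ᵐ[volume] cellIoo ε k := by
  rw [show (volume : Measure (Fin 3 → ℝ)) = Measure.pi fun _ => volume from volume_pi]
  exact (Measure.pi_Ico_ae_eq_pi_Icc).trans (Measure.pi_Ioo_ae_eq_pi_Icc).symm

lemma lintegral_cell_decomp {ε : ℝ} (hε : 0 < ε) {F : (Fin 3 → ℝ) → ℝ≥0∞}
    (hF : Measurable F) :
    ∫⁻ x, F x = ∑' k : Fin 3 → ℤ, ∫⁻ x in cellIco ε k, F x := by
  rw [← setLIntegral_univ, ← iUnion_cellIco hε,
    lintegral_iUnion (fun _ => measurableSet_cellIco) (pairwise_disjoint_cellIco hε)]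

end helpers
lemma measurableSet_unitCube : MeasurableSet unitCube :=
  MeasurableSet.univ_pi fun _ => measurableSet_Ioo

lemma volume_unitCube : volume unitCube = 1 := by
  rw [unitCube, volume_pi, Measure.pi_pi]
  simp [Real.volume_Ioo]

section cov

variable {ε : ℝ} {k : Fin 3 → ℤ}

noncomputable def affT (ε : ℝ) (k : Fin 3 → ℤ) (y : Fin 3 → ℝ) : Fin 3 → ℝ :=
  (fun i => ε * (k i : ℝ)) + ε • y

lemma affT_apply (ε : ℝ) (k : Fin 3 → ℤ) (y : Fin 3 → ℝ) (i : Fin 3) : affT ε k y i = ε * k i + ε * y i := by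
  simp [affT, smul_eq_mul]

lemma affT_image (hε : 0 < ε) : affT ε k '' unitCube = cellIoo ε k := by
  ext z
  constructor
  · rintro ⟨y, hy, rfl⟩
    intro i _
    have h := hy i (Set.mem_univ i)
    simp only [Set.mem_Ioo] at h ⊢
    rw [affT_apply]
    constructor
    · nlinarith [h.1]
    · nlinarith [h.2]
  · intro hz
    refine ⟨fun i => (z i - ε * k i) / ε, ?_, ?_⟩
    · intro i _
      have h := hz i (Set.mem_univ i)
      simp only [Set.mem_Ioo] at h ⊢
      constructor
      · apply div_pos (by linarith [h.1]) hε
      · rw [div_lt_one hε]; nlinarith [h.2]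
    · funext i
      rw [affT_apply]
      field_simp
      ring

lemma affT_hasFDerivAt (ε : ℝ) (k : Fin 3 → ℤ) (y : Fin 3 → ℝ) :
    HasFDerivAt (affT ε k) (ε • ContinuousLinearMap.id ℝ (Fin 3 → ℝ)) y := by
  have : HasFDerivAt (fun y : Fin 3 → ℝ => y) (ContinuousLinearMap.id ℝ (Fin 3 → ℝ)) y :=
    hasFDerivAt_id y
  exact (this.const_smul ε).const_add _

lemma affT_injOn (hε : 0 < ε) : Set.InjOn (affT ε k) unitCube := by
  intro a _ b _ hab
  funext i
  have := congrFun hab i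
  rw [affT_apply, affT_apply] at this
  have h2 : ε * a i = ε * b i := by linarith
  exact mul_left_cancel₀ hε.ne' h2

lemma det_smul_id (hε : 0 < ε) : |(ε • ContinuousLinearMap.id ℝ (Fin 3 → ℝ)).det| = ε ^ 3 := by
  have h1 : (ε • ContinuousLinearMap.id ℝ (Fin 3 → ℝ)).det
      = LinearMap.det (ε • (LinearMap.id : (Fin 3 → ℝ) →ₗ[ℝ] (Fin 3 → ℝ))) := rfl
  rw [h1, LinearMap.det_smul, LinearMap.det_id, mul_one,
    Module.finrank_fintype_fun_eq_card, Fintype.card_fin]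
  exact abs_of_nonneg (by positivity)

lemma lintegral_cellIoo_eq (hε : 0 < ε) (g : (Fin 3 → ℝ) → ℝ≥0∞) :
    ∫⁻ z in cellIoo ε k, g z = ENNReal.ofReal ε ^ 3 * ∫⁻ y in unitCube, g (affT ε k y) := by
  rw [← affT_image hε,
    lintegral_image_eq_lintegral_abs_det_fderiv_mul volume measurableSet_unitCube
      (fun y _ => (affT_hasFDerivAt ε k y).hasFDerivWithinAt) (affT_injOn hε) g]
  simp only [det_smul_id hε]
  rw [lintegral_const_mul' _ _ ENNReal.ofReal_ne_top,
    ← ENNReal.ofReal_pow hε.le]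

end cov

lemma measurable_inner_unfold (ε : ℝ) {g : (Fin 3 → ℝ) → ℝ≥0∞} (hg : Measurable g) :
    Measurable fun x => ∫⁻ y in unitCube, g (unfoldPt ε x y) :=
  Measurable.lintegral_prod_right' (hg.comp (measurable_unfoldPt ε))

lemma lintegral_unfold {ε : ℝ} (hε : 0 < ε) {g : (Fin 3 → ℝ) → ℝ≥0∞} (hg : Measurable g) :
    ∫⁻ x, ∫⁻ y in unitCube, g (unfoldPt ε x y) ∂volume ∂volume = ∫⁻ z, g z := by
  calc ∫⁻ x, ∫⁻ y in unitCube, g (unfoldPt ε x y) ∂volume ∂volume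
      = ∑' k : Fin 3 → ℤ, ∫⁻ x in cellIco ε k, ∫⁻ y in unitCube, g (unfoldPt ε x y) :=
        lintegral_cell_decomp hε (measurable_inner_unfold ε hg)
    _ = ∑' k : Fin 3 → ℤ, ∫⁻ x in cellIco ε k, ∫⁻ y in unitCube, g (affT ε k y) := by
        refine tsum_congr fun k => ?_
        refine setLIntegral_congr_fun measurableSet_cellIco ?_
        intro x hx
        have hfl := (mem_cellIco_iff hε).1 hx
        show ∫⁻ y in unitCube, g (unfoldPt ε x y) = ∫⁻ y in unitCube, g (affT ε k y)
        congr 1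
        funext y
        congr 1
        funext i
        rw [unfoldPt, affT_apply, hfl i]
    _ = ∑' k : Fin 3 → ℤ, (∫⁻ y in unitCube, g (affT ε k y)) * volume (cellIco ε k) := by
        refine tsum_congr fun k => ?_
        exact setLIntegral_const _ _
    _ = ∑' k : Fin 3 → ℤ, ∫⁻ z in cellIoo ε k, g z := by
        refine tsum_congr fun k => ?_
        rw [lintegral_cellIoo_eq hε g, volume_cellIco hε, mul_comm]
    _ = ∑' k : Fin 3 → ℤ, ∫⁻ z in cellIco ε k, g z := by
        refine tsum_congr fun k => ?_
        exact (setLIntegral_congr (cellIco_ae_eq_cellIoo k)).symm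
    _ = ∫⁻ z, g z := (lintegral_cell_decomp hε hg).symm

set_option maxHeartbeats 1000000 in
lemma unfold_ae_eq {ε : ℝ} (hε : 0 < ε) {f g : (Fin 3 → ℝ) → ℝ}
    (h : f =ᵐ[volume] g) :
    ∀ᵐ x ∂(volume : Measure (Fin 3 → ℝ)), ∀ᵐ y ∂(volume.restrict unitCube),
      f (unfoldPt ε x y) = g (unfoldPt ε x y) := by
  have h0 : volume {z : Fin 3 → ℝ | f z ≠ g z} = 0 := by
    have := ae_iff.1 h
    simpa [Ne] using this
  obtain ⟨N, hNsub, hNm, hN0⟩ := exists_measurable_superset_of_null h0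
  set ind : (Fin 3 → ℝ) → ℝ≥0∞ := N.indicator fun _ => 1 with hind
  have hindm : Measurable ind := measurable_one.indicator hNm
  have key : ∫⁻ x, ∫⁻ y in unitCube, ind (unfoldPt ε x y) ∂volume ∂volume = 0 := by
    rw [lintegral_unfold hε hindm]
    rw [hind, lintegral_indicator hNm]
    simp [hN0]
  rw [lintegral_eq_zero_iff (measurable_inner_unfold ε hindm)] at key
  filter_upwards [key] with x hx
  have hx' : ∫⁻ y in unitCube, ind (unfoldPt ε x y) = 0 := hx
  have hup : Measurable fun y : Fin 3 → ℝ => unfoldPt ε x y := by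
    apply measurable_pi_lambda
    intro i
    show Measurable fun y : Fin 3 → ℝ => ε * (⌊x i / ε⌋ : ℝ) + ε * y i
    exact measurable_const.add (by fun_prop)
  have hmy : Measurable fun y : Fin 3 → ℝ => ind (unfoldPt ε x y) := hindm.comp hup
  rw [lintegral_eq_zero_iff hmy] at hx'
  filter_upwards [hx'] with y hy
  have hy' : ind (unfoldPt ε x y) = 0 := hy
  have hnN : unfoldPt ε x y ∉ N := by
    intro hmem
    rw [hind, Set.indicator_of_mem hmem] at hy'
    simp at hy'
  have : unfoldPt ε x y ∉ {z : Fin 3 → ℝ | f z ≠ g z} := fun hc => hnN (hNsub hc)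
  simpa using this

lemma double_congr {ε : ℝ} (hε : 0 < ε) {f₁ f₂ φ₁ φ₂ : (Fin 3 → ℝ) → ℝ}
    (h1 : f₁ =ᵐ[volume] f₂) (h2 : φ₁ =ᵐ[volume] φ₂) :
    ∫⁻ x, ∫⁻ y in unitCube, ENNReal.ofReal (|f₁ (unfoldPt ε x y) - φ₁ x| ^ 2) ∂volume ∂volume
      = ∫⁻ x, ∫⁻ y in unitCube, ENNReal.ofReal (|f₂ (unfoldPt ε x y) - φ₂ x| ^ 2) ∂volume ∂volume := by
  refine lintegral_congr_ae ?_
  filter_upwards [unfold_ae_eq hε h1, h2] with x hx hφx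
  refine lintegral_congr_ae ?_
  filter_upwards [hx] with y hy
  rw [hy, hφx]

lemma dist_unfoldPt_le {ε : ℝ} (hε : 0 < ε) (x : Fin 3 → ℝ) {y : Fin 3 → ℝ}
    (hy : y ∈ unitCube) : dist (unfoldPt ε x y) x ≤ ε := by
  refine (dist_pi_le_iff hε.le).2 fun i => ?_
  have hyi : y i ∈ Set.Ioo (0:ℝ) 1 := hy i (Set.mem_univ i)
  have h1 : ε * (⌊x i / ε⌋ : ℝ) ≤ x i := by
    have := Int.floor_le (x i / ε)
    calc ε * (⌊x i / ε⌋ : ℝ) ≤ ε * (x i / ε) := by nlinarith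
      _ = x i := by field_simp
  have h2 : x i < ε * ((⌊x i / ε⌋ : ℝ) + 1) := by
    have := Int.lt_floor_add_one (x i / ε)
    have h := (div_lt_iff₀ hε).1 this
    nlinarith
  rw [Real.dist_eq, unfoldPt, abs_le]
  constructor <;> nlinarith [hyi.1, hyi.2]

lemma tendsto_unfold_cont {ψ : (Fin 3 → ℝ) → ℝ} (hc : Continuous ψ) (hs : HasCompactSupport ψ) :
    Tendsto (fun ε => ∫⁻ x : Fin 3 → ℝ, ∫⁻ y in unitCube,
        ENNReal.ofReal (|ψ (unfoldPt ε x y) - ψ x| ^ 2) ∂volume ∂volume)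
      (nhdsWithin 0 (Set.Ioi 0)) (nhds 0) := by
  rw [ENNReal.tendsto_nhds_zero]
  intro δ hδ
  obtain ⟨R, hR⟩ := hs.isBounded.subset_closedBall (0 : Fin 3 → ℝ)
  set K := Metric.closedBall (0 : Fin 3 → ℝ) (R + 1) with hK
  have hKvol : volume K ≠ ⊤ := (IsCompact.measure_lt_top (isCompact_closedBall _ _)).ne
  set C := volume K + 1 with hC
  have hC0 : C ≠ 0 := by simp [hC]
  have hCtop : C ≠ ⊤ := by simp [hC, hKvol]
  have hδC : 0 < δ / C := ENNReal.div_pos hδ.ne' hCtop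
  set t := min (δ / C) 1 with ht
  have ht0 : t ≠ 0 := by
    simp only [ht, ne_eq, min_eq_iff]
    rintro (⟨h, -⟩ | ⟨h, -⟩) <;> simp_all [hδC.ne']
  have httop : t ≠ ⊤ := ne_top_of_le_ne_top ENNReal.one_ne_top (min_le_right _ _)
  set ρ := Real.sqrt t.toReal with hρdef
  have hρ : 0 < ρ := Real.sqrt_pos.2 (ENNReal.toReal_pos ht0 httop)
  have hρ2 : ENNReal.ofReal (ρ ^ 2) ≤ δ / C := by
    have h : ρ ^ 2 = t.toReal := Real.sq_sqrt ENNReal.toReal_nonneg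
    rw [h, ENNReal.ofReal_toReal httop]
    exact min_le_left _ _
  obtain ⟨η, hη, hηρ⟩ := Metric.uniformContinuous_iff.1
    (hs.uniformContinuous_of_continuous hc) ρ hρ
  filter_upwards [Ioo_mem_nhdsGT (lt_min hη one_pos)] with ε hεm
  have hε : 0 < ε := hεm.1
  have hεη : ε < η := lt_of_lt_of_le hεm.2 (min_le_left _ _)
  have hε1 : ε ≤ 1 := le_of_lt (lt_of_lt_of_le hεm.2 (min_le_right _ _))
  have hbound : ∀ x : Fin 3 → ℝ, ∀ y ∈ unitCube,
      ENNReal.ofReal (|ψ (unfoldPt ε x y) - ψ x| ^ 2)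
        ≤ K.indicator (fun _ => ENNReal.ofReal (ρ ^ 2)) x := by
    intro x y hy
    by_cases hxK : x ∈ K
    · rw [Set.indicator_of_mem hxK]
      apply ENNReal.ofReal_le_ofReal
      have hd : dist (unfoldPt ε x y) x < η := lt_of_le_of_lt (dist_unfoldPt_le hε x hy) hεη
      have h2 := hηρ hd
      rw [Real.dist_eq] at h2
      nlinarith [abs_nonneg (ψ (unfoldPt ε x y) - ψ x), h2]
    · rw [Set.indicator_of_notMem hxK]
      have hxd : R + 1 < dist x 0 := by
        by_contra hcon
        exact hxK (Metric.mem_closedBall.2 (not_lt.1 hcon))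
      have hx0 : ψ x = 0 := by
        apply image_eq_zero_of_notMem_tsupport
        intro hmem
        have := hR hmem
        rw [Metric.mem_closedBall] at this
        linarith
      have hp0 : ψ (unfoldPt ε x y) = 0 := by
        apply image_eq_zero_of_notMem_tsupport
        intro hmem
        have h3 := hR hmem
        rw [Metric.mem_closedBall] at h3
        have h4 : dist x 0 ≤ dist x (unfoldPt ε x y) + dist (unfoldPt ε x y) 0 := dist_triangle _ _ _
        have h5 : dist x (unfoldPt ε x y) ≤ ε := by
          rw [dist_comm]; exact dist_unfoldPt_le hε x hy
        linarith
      simp [hx0, hp0]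
  calc ∫⁻ x : Fin 3 → ℝ, ∫⁻ y in unitCube,
        ENNReal.ofReal (|ψ (unfoldPt ε x y) - ψ x| ^ 2) ∂volume ∂volume
      ≤ ∫⁻ x : Fin 3 → ℝ, ∫⁻ _ in unitCube,
          K.indicator (fun _ => ENNReal.ofReal (ρ ^ 2)) x ∂volume ∂volume := by
        refine lintegral_mono fun x => ?_
        exact setLIntegral_mono measurable_const (fun y hy => hbound x y hy)
    _ = ∫⁻ x : Fin 3 → ℝ, K.indicator (fun _ => ENNReal.ofReal (ρ ^ 2)) x ∂volume := by
        simp [setLIntegral_const, volume_unitCube]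
    _ = ENNReal.ofReal (ρ ^ 2) * volume K := by
        rw [lintegral_indicator Metric.isClosed_closedBall.measurableSet]
        · exact setLIntegral_const _ _
    _ ≤ (δ / C) * C := by
        exact mul_le_mul' hρ2 (by rw [hC]; exact self_le_add_right _ _)
    _ ≤ δ := le_of_eq (ENNReal.div_mul_cancel hC0 hCtop)

lemma ofReal_sq_add4_le (a b c d : ℝ) :
    ENNReal.ofReal (|a + b + c + d| ^ 2) ≤
      4 * (ENNReal.ofReal (|a| ^ 2) + ENNReal.ofReal (|b| ^ 2) + ENNReal.ofReal (|c| ^ 2)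
        + ENNReal.ofReal (|d| ^ 2)) := by
  have habs : |a + b + c + d| ≤ |a| + |b| + |c| + |d| := by
    calc |a + b + c + d| ≤ |a + b + c| + |d| := abs_add_le _ _
      _ ≤ |a + b| + |c| + |d| := by linarith [abs_add_le (a + b) c]
      _ ≤ |a| + |b| + |c| + |d| := by linarith [abs_add_le a b]
  have h : |a + b + c + d| ^ 2 ≤ 4 * (|a| ^ 2 + |b| ^ 2 + |c| ^ 2 + |d| ^ 2) := by
    nlinarith [abs_nonneg (a + b + c + d), abs_nonneg a, abs_nonneg b, abs_nonneg c,
      abs_nonneg d, sq_nonneg (|a| - |b|), sq_nonneg (|a| - |c|), sq_nonneg (|a| - |d|),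
      sq_nonneg (|b| - |c|), sq_nonneg (|b| - |d|), sq_nonneg (|c| - |d|)]
  calc ENNReal.ofReal (|a + b + c + d| ^ 2)
      ≤ ENNReal.ofReal (4 * (|a| ^ 2 + |b| ^ 2 + |c| ^ 2 + |d| ^ 2)) :=
        ENNReal.ofReal_le_ofReal h
    _ = 4 * (ENNReal.ofReal (|a| ^ 2) + ENNReal.ofReal (|b| ^ 2) + ENNReal.ofReal (|c| ^ 2)
        + ENNReal.ofReal (|d| ^ 2)) := by
        rw [ENNReal.ofReal_mul (by norm_num)]
        rw [ENNReal.ofReal_add (by positivity) (by positivity),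
          ENNReal.ofReal_add (by positivity) (by positivity),
          ENNReal.ofReal_add (by positivity) (by positivity)]
        norm_num

lemma lintegral_sq_eq_eLpNorm (u : (Fin 3 → ℝ) → ℝ) :
    ∫⁻ z, ENNReal.ofReal (|u z| ^ 2) ∂(volume : Measure (Fin 3 → ℝ)) = eLpNorm u 2 volume ^ 2 := by
  rw [eLpNorm_eq_lintegral_rpow_enorm_toReal (by norm_num) (by norm_num)]
  rw [← ENNReal.rpow_natCast _ 2, ← ENNReal.rpow_mul]
  norm_num
  refine lintegral_congr fun z => ?_
  rw [Real.enorm_eq_ofReal_abs, ← ENNReal.ofReal_pow (abs_nonneg _), sq_abs]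

/-- If φ_ε → φ strongly in L²(ℝ³), then T_ε(φ_ε) → φ strongly in L²(ℝ³ × Y). -/
theorem unfold_strong_l2_convergence (Φ : ℝ → (Fin 3 → ℝ) → ℝ) (φ : (Fin 3 → ℝ) → ℝ)
    (hΦ : ∀ ε > (0 : ℝ), MemLp (Φ ε) 2 volume) (hφ : MemLp φ 2 volume)
    (hconv : Tendsto (fun ε => ∫⁻ x : Fin 3 → ℝ,
        ENNReal.ofReal (|Φ ε x - φ x| ^ 2) ∂volume) (nhdsWithin 0 (Set.Ioi 0)) (nhds 0)) :
    Tendsto (fun ε => ∫⁻ x : Fin 3 → ℝ, ∫⁻ y in unitCube,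
        ENNReal.ofReal (|unfold ε (Φ ε) x y - φ x| ^ 2) ∂volume ∂volume)
      (nhdsWithin 0 (Set.Ioi 0)) (nhds 0) := by
  rw [ENNReal.tendsto_nhds_zero]
  intro δ hδ
  have h16 : (0 : ℝ≥0∞) < δ / 16 := ENNReal.div_pos hδ.ne' (by norm_num)
  -- measurable representative of φ
  have hφsm := hφ.aestronglyMeasurable
  set f : (Fin 3 → ℝ) → ℝ := hφsm.mk φ with hfdef
  have hfm : Measurable f := hφsm.stronglyMeasurable_mk.measurable
  have hφf : φ =ᵐ[volume] f := hφsm.ae_eq_mk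
  -- continuous compactly supported approximation
  have hη0 : (δ / 16) ^ (1/2 : ℝ) ≠ 0 := by
    simp only [ne_eq, ENNReal.rpow_eq_zero_iff, not_or]
    constructor
    · rintro ⟨h, -⟩; exact h16.ne' h
    · rintro ⟨h, hlt⟩; norm_num at hlt
  obtain ⟨ψ, hψsupp, hψnorm, hψcont, -⟩ :=
    hφ.exists_hasCompactSupport_eLpNorm_sub_le (by norm_num : (2 : ℝ≥0∞) ≠ ∞) hη0
  have hψm : Measurable ψ := hψcont.measurable
  have T2bound : ∫⁻ z, ENNReal.ofReal (|φ z - ψ z| ^ 2) ∂volume ≤ δ / 16 := by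
    have heq : ∫⁻ z, ENNReal.ofReal (|φ z - ψ z| ^ 2) ∂volume
        = eLpNorm (fun z => φ z - ψ z) 2 volume ^ 2 := lintegral_sq_eq_eLpNorm _
    rw [heq]
    have h1 : eLpNorm (fun z => φ z - ψ z) 2 volume ≤ (δ / 16) ^ (1/2 : ℝ) := hψnorm
    calc eLpNorm (fun z => φ z - ψ z) 2 volume ^ 2 ≤ ((δ / 16) ^ (1/2 : ℝ)) ^ 2 :=
          pow_le_pow_left' h1 2
      _ = δ / 16 := by
          rw [← ENNReal.rpow_natCast _ 2, ← ENNReal.rpow_mul]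
          norm_num
  have T2boundf : ∫⁻ z, ENNReal.ofReal (|f z - ψ z| ^ 2) ∂volume ≤ δ / 16 := by
    refine le_trans (le_of_eq (lintegral_congr_ae ?_)) T2bound
    filter_upwards [hφf] with z hz
    rw [hz]
  have hconv' := ENNReal.tendsto_nhds_zero.1 hconv (δ / 16) h16
  have hB' := ENNReal.tendsto_nhds_zero.1 (tendsto_unfold_cont hψcont hψsupp) (δ / 16) h16
  filter_upwards [hconv', hB', self_mem_nhdsWithin] with ε h1 h3 hεmem
  have hε : (0 : ℝ) < ε := hεmem
  -- measurable representative of Φ ε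
  have hΦsm := (hΦ ε hε).aestronglyMeasurable
  set g : (Fin 3 → ℝ) → ℝ := hΦsm.mk (Φ ε) with hgdef
  have hgm : Measurable g := hΦsm.stronglyMeasurable_mk.measurable
  have hΦg : Φ ε =ᵐ[volume] g := hΦsm.ae_eq_mk
  -- abbreviations
  set A : (Fin 3 → ℝ) → ℝ≥0∞ := fun z => ENNReal.ofReal (|g z - f z| ^ 2) with hAdef
  set B : (Fin 3 → ℝ) → ℝ≥0∞ := fun z => ENNReal.ofReal (|f z - ψ z| ^ 2) with hBdef
  set D : (Fin 3 → ℝ) → ℝ≥0∞ := fun x => ENNReal.ofReal (|ψ x - f x| ^ 2) with hDdef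
  have hAm : Measurable A := (((hgm.sub hfm).abs).pow_const 2).ennreal_ofReal
  have hBm : Measurable B := (((hfm.sub hψm).abs).pow_const 2).ennreal_ofReal
  have hDm : Measurable D := (((hψm.sub hfm).abs).pow_const 2).ennreal_ofReal
  have hCm : Measurable fun q : (Fin 3 → ℝ) × (Fin 3 → ℝ) =>
      ENNReal.ofReal (|ψ (unfoldPt ε q.1 q.2) - ψ q.1| ^ 2) :=
    ((((hψm.comp (measurable_unfoldPt ε)).sub (hψm.comp measurable_fst)).abs).pow_const 2).ennreal_ofReal
  simp only [unfold]
  calc ∫⁻ x, ∫⁻ y in unitCube, ENNReal.ofReal (|Φ ε (unfoldPt ε x y) - φ x| ^ 2) ∂volume ∂volume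
      = ∫⁻ x, ∫⁻ y in unitCube, ENNReal.ofReal (|g (unfoldPt ε x y) - f x| ^ 2) ∂volume ∂volume :=
        double_congr hε hΦg hφf
    _ ≤ ∫⁻ x, ∫⁻ y in unitCube, 4 * (A (unfoldPt ε x y) + B (unfoldPt ε x y)
          + ENNReal.ofReal (|ψ (unfoldPt ε x y) - ψ x| ^ 2) + D x) ∂volume ∂volume := by
        refine lintegral_mono fun x => lintegral_mono fun y => ?_
        have h4 := ofReal_sq_add4_le (g (unfoldPt ε x y) - f (unfoldPt ε x y))
          (f (unfoldPt ε x y) - ψ (unfoldPt ε x y)) (ψ (unfoldPt ε x y) - ψ x) (ψ x - f x)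
        have he : g (unfoldPt ε x y) - f (unfoldPt ε x y)
            + (f (unfoldPt ε x y) - ψ (unfoldPt ε x y)) + (ψ (unfoldPt ε x y) - ψ x)
            + (ψ x - f x) = g (unfoldPt ε x y) - f x := by ring
        rw [he] at h4
        exact h4
    _ = 4 * ((∫⁻ x, ∫⁻ y in unitCube, A (unfoldPt ε x y) ∂volume ∂volume)
          + (∫⁻ x, ∫⁻ y in unitCube, B (unfoldPt ε x y) ∂volume ∂volume)
          + (∫⁻ x, ∫⁻ y in unitCube, ENNReal.ofReal (|ψ (unfoldPt ε x y) - ψ x| ^ 2) ∂volume ∂volume)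
          + ∫⁻ x, D x ∂volume) := by
        have inner_eq : ∀ x : Fin 3 → ℝ,
            ∫⁻ y in unitCube, 4 * (A (unfoldPt ε x y) + B (unfoldPt ε x y)
              + ENNReal.ofReal (|ψ (unfoldPt ε x y) - ψ x| ^ 2) + D x) ∂volume
            = 4 * ((∫⁻ y in unitCube, A (unfoldPt ε x y) ∂volume)
              + (∫⁻ y in unitCube, B (unfoldPt ε x y) ∂volume)
              + (∫⁻ y in unitCube, ENNReal.ofReal (|ψ (unfoldPt ε x y) - ψ x| ^ 2) ∂volume)
              + D x) := by
          intro x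
          have hupx := measurable_unfoldPt_right ε x
          have hCx : Measurable fun y : Fin 3 → ℝ =>
              ENNReal.ofReal (|ψ (unfoldPt ε x y) - ψ x| ^ 2) :=
            ((((hψm.comp hupx).sub measurable_const).abs).pow_const 2).ennreal_ofReal
          have hA1 : Measurable fun y : Fin 3 → ℝ => A (unfoldPt ε x y) := hAm.comp hupx
          have hB1 : Measurable fun y : Fin 3 → ℝ => B (unfoldPt ε x y) := hBm.comp hupx
          have hsum2 : Measurable fun y : Fin 3 → ℝ =>
              A (unfoldPt ε x y) + B (unfoldPt ε x y) := hA1.add hB1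
          have hsum3 : Measurable fun y : Fin 3 → ℝ =>
              A (unfoldPt ε x y) + B (unfoldPt ε x y)
                + ENNReal.ofReal (|ψ (unfoldPt ε x y) - ψ x| ^ 2) := hsum2.add hCx
          rw [lintegral_const_mul' _ _ (by norm_num : (4:ℝ≥0∞) ≠ ⊤)]
          congr 1
          rw [lintegral_add_left hsum3, lintegral_add_left hsum2, lintegral_add_left hA1,
            setLIntegral_const, volume_unitCube, mul_one]
        simp_rw [inner_eq]
        rw [lintegral_const_mul' _ _ (by norm_num : (4:ℝ≥0∞) ≠ ⊤)]
        congr 1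
        have hIA : Measurable fun x => ∫⁻ y in unitCube, A (unfoldPt ε x y) ∂volume :=
          measurable_inner_unfold ε hAm
        have hIB : Measurable fun x => ∫⁻ y in unitCube, B (unfoldPt ε x y) ∂volume :=
          measurable_inner_unfold ε hBm
        have hIC : Measurable fun x =>
            ∫⁻ y in unitCube, ENNReal.ofReal (|ψ (unfoldPt ε x y) - ψ x| ^ 2) ∂volume :=
          Measurable.lintegral_prod_right' hCm
        have hS2 : Measurable fun x => (∫⁻ y in unitCube, A (unfoldPt ε x y) ∂volume)
            + ∫⁻ y in unitCube, B (unfoldPt ε x y) ∂volume := hIA.add hIB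
        have hS3 : Measurable fun x => (∫⁻ y in unitCube, A (unfoldPt ε x y) ∂volume)
            + (∫⁻ y in unitCube, B (unfoldPt ε x y) ∂volume)
            + ∫⁻ y in unitCube, ENNReal.ofReal (|ψ (unfoldPt ε x y) - ψ x| ^ 2) ∂volume :=
          hS2.add hIC
        rw [lintegral_add_left hS3, lintegral_add_left hS2, lintegral_add_left hIA]
    _ ≤ 4 * (δ / 16 + δ / 16 + δ / 16 + δ / 16) := by
        refine mul_le_mul' le_rfl ?_
        refine add_le_add (add_le_add (add_le_add ?_ ?_) ?_) ?_
        · rw [lintegral_unfold hε hAm]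
          refine le_trans (le_of_eq (lintegral_congr_ae ?_)) h1
          filter_upwards [hΦg, hφf] with z h1z h2z
          rw [hAdef]
          simp only
          rw [← h1z, ← h2z]
        · rw [lintegral_unfold hε hBm]
          exact T2boundf
        · exact h3
        · refine le_trans (le_of_eq (lintegral_congr ?_)) T2boundf
          intro z
          show ENNReal.ofReal (|ψ z - f z| ^ 2) = ENNReal.ofReal (|f z - ψ z| ^ 2)
          rw [abs_sub_comm]
    _ = δ := by
        have : (4 : ℝ≥0∞) * (δ / 16 + δ / 16 + δ / 16 + δ / 16) = 16 * (δ / 16) := by ring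
        rw [this, mul_comm, ENNReal.div_mul_cancel (by norm_num) (by norm_num)]
end

section
/- Let S be a compact subset of the open unit cube (0,1)³ with finite two-dimensional Hausdorff measure, let ε > 0, and let φ : ℝ³ → ℝ be measurable. Then ∫_{ℝ³} ∫_S |φ(ε⌊x/ε⌋ + εy)|² dμ_H²(y) dx = ε · ∫_{S_ε} |φ|² dμ_H², where μ_H² denotes the two-dimensional Hausdorff measure on ℝ³, S_ε = ⋃_{k∈ℤ³} (εk + εS) is the ε-periodic copy of the rescaled set εS (the sets εk + εS, k ∈ ℤ³, being pairwise disjoint since S ⊂ (0,1)³), the inner integral is with respect to μ_H² restricted to S, the outer integral is with respect to Lebesgue measure on ℝ³, and both sides are allowed to equal +∞. -/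
open MeasureTheory
open scoped Pointwise

/-- S_ε = ⋃_{k ∈ ℤ³} (εk + εS), the ε-periodic copies of the rescaled set εS. -/
def periodicCopies (ε : ℝ) (S : Set (Fin 3 → ℝ)) : Set (Fin 3 → ℝ) :=
  ⋃ k : Fin 3 → ℤ, (fun y : Fin 3 → ℝ => fun i => ε * (k i : ℝ) + ε * y i) '' S

theorem haus_image_aux (ε : ℝ) (hε : 0 < ε) (c : Fin 3 → ℝ) (B : Set (Fin 3 → ℝ)) :
    μH[2] ((fun y : Fin 3 → ℝ => fun i => c i + ε * y i) '' B)
      = ENNReal.ofReal ε ^ 2 * μH[2] B := by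
  have himg : (fun y : Fin 3 → ℝ => fun i => c i + ε * y i) '' B = c +ᵥ (ε • B) := by
    rw [show (fun y : Fin 3 → ℝ => fun i => c i + ε * y i)
        = (fun z : Fin 3 → ℝ => c +ᵥ z) ∘ (fun y : Fin 3 → ℝ => ε • y) from rfl,
      Set.image_comp, Set.image_smul, Set.image_vadd]
  rw [himg, MeasureTheory.hausdorffMeasure_vadd _ (Or.inl (by norm_num)),
    Measure.hausdorffMeasure_smul₀ (by norm_num) (ne_of_gt hε)]
  have : ‖ε‖₊ = ε.toNNReal := by
    ext; simp [Real.norm_of_nonneg hε.le, Real.coe_toNNReal _ hε.le]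
  rw [this, ENNReal.smul_def, smul_eq_mul]
  congr 1
  rw [ENNReal.ofReal, ← ENNReal.coe_pow]
  norm_cast

theorem lintegral_image_affine_aux (ε : ℝ) (hε : 0 < ε) (c : Fin 3 → ℝ) (B : Set (Fin 3 → ℝ))
    (F : (Fin 3 → ℝ) → ENNReal) :
    ∫⁻ z in (fun y : Fin 3 → ℝ => fun i => c i + ε * y i) '' B, F z ∂μH[2]
      = ENNReal.ofReal ε ^ 2 * ∫⁻ y in B, F (fun i => c i + ε * y i) ∂μH[2] := by
  set e : (Fin 3 → ℝ) ≃ᵐ (Fin 3 → ℝ) :=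
    ((Homeomorph.smulOfNeZero (ε : ℝ) hε.ne').trans
      (Homeomorph.addLeft c)).toMeasurableEquiv with he
  have heq : ∀ y, e y = fun i => c i + ε * y i := fun y => rfl
  have hmeas : μH[2].restrict ((fun y : Fin 3 → ℝ => fun i => c i + ε * y i) '' B)
      = (ENNReal.ofReal ε ^ 2) • Measure.map e (μH[2].restrict B) := by
    ext A hA
    rw [Measure.restrict_apply hA, Measure.smul_apply,
      Measure.map_apply e.measurable hA, Measure.restrict_apply (e.measurable hA),
      smul_eq_mul]
    have himg : (fun y : Fin 3 → ℝ => fun i => c i + ε * y i) '' (⇑e ⁻¹' A ∩ B)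
        = A ∩ (fun y : Fin 3 → ℝ => fun i => c i + ε * y i) '' B := by
      have : (fun y : Fin 3 → ℝ => fun i => c i + ε * y i) = ⇑e := rfl
      rw [this, Set.image_inter e.injective, Set.image_preimage_eq A e.surjective]
    rw [← himg, haus_image_aux ε hε]
  rw [hmeas, lintegral_smul_measure, lintegral_map_equiv]
  simp only [heq, smul_eq_mul]

/-- Exact L² identity for the boundary unfolding operator:
∫_{ℝ³} ∫_S |T_ε^b(φ)(x,y)|² dμ_H²(y) dx = ε ∫_{S_ε} |φ|² dμ_H². -/
theorem boundary_unfold_l2_identity (S : Set (Fin 3 → ℝ)) (hScomp : IsCompact S)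
    (hSsub : S ⊆ unitCube) (hSfin : μH[2] S < ⊤)
    (ε : ℝ) (hε : 0 < ε) (φ : (Fin 3 → ℝ) → ℝ) (hφ : Measurable φ) :
    ∫⁻ x : Fin 3 → ℝ, ∫⁻ y in S,
        ENNReal.ofReal (|φ (unfoldPt ε x y)| ^ 2) ∂μH[2] ∂volume
      = ENNReal.ofReal ε *
          ∫⁻ z in periodicCopies ε S, ENNReal.ofReal (|φ z| ^ 2) ∂μH[2] := by
  set F : (Fin 3 → ℝ) → ENNReal := fun z => ENNReal.ofReal (|φ z| ^ 2) with hF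
  set T : (Fin 3 → ℤ) → (Fin 3 → ℝ) → (Fin 3 → ℝ) :=
    fun k y => fun i => ε * (k i : ℝ) + ε * y i with hT
  set g : (Fin 3 → ℤ) → ENNReal := fun k => ∫⁻ y in S, F (T k y) ∂μH[2] with hg
  -- basic floor fact
  have hfloor : ∀ (r : ℝ) (m : ℤ), ε * m ≤ r → r < ε * (m + 1) → ⌊r / ε⌋ = m := by
    intro r m h1 h2
    rw [Int.floor_eq_iff]
    constructor
    · rw [le_div_iff₀ hε]; linarith
    · rw [div_lt_iff₀ hε]; push_cast; linarith
  -- the copies T k '' S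
  have hTcont : ∀ k, Continuous (T k) := by
    intro k
    apply continuous_pi
    intro i
    exact continuous_const.add (continuous_const.mul (continuous_apply i))
  have hTSmeas : ∀ k, MeasurableSet (T k '' S) := fun k =>
    (hScomp.image (hTcont k)).measurableSet
  have hfloorT : ∀ k (z : Fin 3 → ℝ), z ∈ T k '' S → ∀ i, ⌊z i / ε⌋ = k i := by
    rintro k z ⟨y, hy, rfl⟩ i
    have hy' : y i ∈ Set.Ioo (0 : ℝ) 1 := hSsub hy i (Set.mem_univ i)
    refine hfloor _ _ ?_ ?_
    · simp only [hT]
      nlinarith [hy'.1]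
    · simp only [hT]
      push_cast
      nlinarith [hy'.2]
  have hdisj : Pairwise (Function.onFun Disjoint fun k => T k '' S) := by
    intro k l hkl
    rw [Function.onFun, Set.disjoint_left]
    intro z hzk hzl
    exact hkl (funext fun i => by rw [← hfloorT k z hzk i, hfloorT l z hzl i])
  have hRHS : ∫⁻ z in periodicCopies ε S, F z ∂μH[2]
      = ∑' k : Fin 3 → ℤ, ENNReal.ofReal ε ^ 2 * g k := by
    rw [periodicCopies, lintegral_iUnion hTSmeas hdisj]
    exact tsum_congr fun k => lintegral_image_affine_aux ε hε (fun i => ε * k i) S F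
  -- the cells
  set cell : (Fin 3 → ℤ) → Set (Fin 3 → ℝ) :=
    fun k => Set.univ.pi fun i => Set.Ico (ε * k i) (ε * (k i + 1)) with hcell
  have hcellmeas : ∀ k, MeasurableSet (cell k) :=
    fun k => MeasurableSet.univ_pi fun i => measurableSet_Ico
  have hcellfloor : ∀ k x, x ∈ cell k → ∀ i, ⌊x i / ε⌋ = k i := by
    intro k x hx i
    have := hx i (Set.mem_univ i)
    exact hfloor _ _ this.1 (by push_cast; exact_mod_cast this.2)
  have hcellunion : (⋃ k, cell k) = Set.univ := by
    refine Set.eq_univ_of_forall fun x => Set.mem_iUnion.mpr ⟨fun i => ⌊x i / ε⌋, ?_⟩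
    intro i _
    constructor
    · rw [← le_div_iff₀' hε]; exact Int.floor_le _
    · rw [← div_lt_iff₀' hε]; push_cast; exact Int.lt_floor_add_one _
  have hcelldisj : Pairwise (Function.onFun Disjoint cell) := by
    intro k l hkl
    rw [Function.onFun, Set.disjoint_left]
    intro x hxk hxl
    exact hkl (funext fun i => by rw [← hcellfloor k x hxk i, hcellfloor l x hxl i])
  have hcellvol : ∀ k, volume (cell k) = ENNReal.ofReal ε ^ 3 := by
    intro k
    rw [hcell]
    rw [volume_pi_pi]
    have : ∀ i : Fin 3, volume (Set.Ico (ε * (k i : ℝ)) (ε * ((k i : ℝ) + 1)))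
        = ENNReal.ofReal ε := by
      intro i
      rw [Real.volume_Ico]
      congr 1
      ring
    simp [this]
  -- LHS computation
  have hLHS : (∫⁻ x : Fin 3 → ℝ, ∫⁻ y in S, F (unfoldPt ε x y) ∂μH[2] ∂volume)
      = ∑' k : Fin 3 → ℤ, ENNReal.ofReal ε ^ 3 * g k := by
    rw [← setLIntegral_univ, ← hcellunion, lintegral_iUnion hcellmeas hcelldisj]
    refine tsum_congr fun k => ?_
    rw [setLIntegral_congr_fun (hcellmeas k)
        (fun ⦃x⦄ hx => ?_), setLIntegral_const, hcellvol k, mul_comm]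
    show (∫⁻ y in S, F (unfoldPt ε x y) ∂μH[2]) = g k
    refine lintegral_congr fun y => ?_
    congr 1
    funext i
    rw [unfoldPt, hcellfloor k x hx i]
  rw [hLHS, hRHS, ← ENNReal.tsum_mul_left]
  exact tsum_congr fun k => by ring
end

section
/- Let S be a compact subset of the open unit cube (0,1)³ with finite two-dimensional Hausdorff measure μ_H²(S) < ∞, and let φ : ℝ³ → ℝ be continuous with compact support. Then lim_{ε→0⁺} ∫_{ℝ³} ∫_S φ(ε⌊x/ε⌋ + εy) dμ_H²(y) dx = μ_H²(S) · ∫_{ℝ³} φ(x) dx, where μ_H² denotes the two-dimensional Hausdorff measure on ℝ³, the inner integral is with respect to μ_H² restricted to S, and the outer integral is with respect to Lebesgue measure on ℝ³. -/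
open MeasureTheory Filter

lemma unfold_dist_le {ε : ℝ} (hε : 0 < ε) {x y : Fin 3 → ℝ} (hy : y ∈ unitCube) :
    dist (unfoldPt ε x y) x ≤ ε := by
  rw [dist_pi_le_iff hε.le]
  intro i
  have hyi : y i ∈ Set.Ioo (0:ℝ) 1 := hy i (Set.mem_univ i)
  have h1 : (⌊x i / ε⌋ : ℝ) * ε ≤ x i := (le_div_iff₀ hε).mp (Int.floor_le _)
  have h2 : x i < ((⌊x i / ε⌋ : ℝ) + 1) * ε := (div_lt_iff₀ hε).mp (Int.lt_floor_add_one _)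
  have h3 : 0 < ε * y i := mul_pos hε hyi.1
  have h4 : ε * y i < ε * 1 := mul_lt_mul_of_pos_left hyi.2 hε
  rw [Real.dist_eq, abs_le]
  constructor <;> simp only [unfoldPt] <;> nlinarith

lemma unfold_zero_of_far {ε : ℝ} (hε : 0 < ε) {φ : (Fin 3 → ℝ) → ℝ} {x y : Fin 3 → ℝ}
    (hy : y ∈ unitCube) (hx : x ∉ Metric.cthickening ε (tsupport φ)) :
    φ (unfoldPt ε x y) = 0 := by
  by_contra h
  exact hx (Metric.mem_cthickening_of_dist_le x (unfoldPt ε x y) ε _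
    (subset_tsupport φ h) (by rw [dist_comm]; exact unfold_dist_le hε hy))

/-- Limit of the boundary unfolding: for continuous compactly supported φ,
∫_{ℝ³} ∫_S T_ε^b(φ)(x,y) dμ_H²(y) dx → μ_H²(S) ∫_{ℝ³} φ(x) dx as ε → 0⁺. -/
theorem boundary_unfold_integral_limit (S : Set (Fin 3 → ℝ)) (hScomp : IsCompact S)
    (hSsub : S ⊆ unitCube) (hSfin : μH[2] S < ⊤)
    (φ : (Fin 3 → ℝ) → ℝ) (hφc : Continuous φ) (hφs : HasCompactSupport φ) :
    Tendsto (fun ε => ∫ x : Fin 3 → ℝ,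
        (∫ y in S, φ (unfoldPt ε x y) ∂μH[2]) ∂volume)
      (nhdsWithin 0 (Set.Ioi 0))
      (nhds ((μH[2] S).toReal * ∫ x : Fin 3 → ℝ, φ x ∂volume)) := by
  have hSmeas : MeasurableSet S := hScomp.isClosed.measurableSet
  set ν : Measure (Fin 3 → ℝ) := μH[2].restrict S with hν
  haveI : IsFiniteMeasure ν := ⟨by rw [hν, Measure.restrict_apply_univ]; exact hSfin⟩
  set c : ℝ := (μH[2] S).toReal with hcdef
  have hνuniv : (ν Set.univ).toReal = c := by rw [hν, Measure.restrict_apply_univ]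
  have hc0 : 0 ≤ c := ENNReal.toReal_nonneg
  obtain ⟨C, hC⟩ := hφs.exists_bound_of_continuous hφc
  have hC0 : 0 ≤ C := le_trans (norm_nonneg _) (hC 0)
  have hφint : Integrable φ volume := hφc.integrable_of_hasCompactSupport hφs
  set K := Metric.cthickening 1 (tsupport φ) with hK
  have hKcomp : IsCompact K := hφs.cthickening
  have hKmeas : MeasurableSet K := hKcomp.isClosed.measurableSet
  have hKvol : volume K < ⊤ := hKcomp.measure_lt_top
  set V : ℝ := (volume K).toReal with hVdef
  have hV0 : 0 ≤ V := ENNReal.toReal_nonneg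
  have hφu : UniformContinuous φ :=
    hφc.uniformContinuous_of_tendsto_cocompact hφs.is_zero_at_infty
  rw [Metric.tendsto_nhdsWithin_nhds]
  intro η hη
  set η' : ℝ := η / (c * V + 1) with hη'def
  have hη'pos : 0 < η' := by positivity
  obtain ⟨δ, hδ0, hδ⟩ := Metric.uniformContinuous_iff.mp hφu η' hη'pos
  refine ⟨min δ 1, lt_min hδ0 one_pos, ?_⟩
  intro ε hε hεd
  have hε0 : 0 < ε := hε
  rw [Real.dist_eq, sub_zero, abs_of_pos hε0] at hεd
  have hεδ : ε < δ := lt_of_lt_of_le hεd (min_le_left _ _)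
  have hε1 : ε ≤ 1 := le_of_lt (lt_of_lt_of_le hεd (min_le_right _ _))
  -- pointwise estimates
  have hdist : ∀ x : Fin 3 → ℝ, ∀ y ∈ S, ‖φ (unfoldPt ε x y) - φ x‖ ≤ η' := by
    intro x y hy
    have hd : dist (unfoldPt ε x y) x < δ :=
      lt_of_le_of_lt (unfold_dist_le hε0 (hSsub hy)) hεδ
    have := hδ hd
    rw [Real.dist_eq] at this
    exact this.le
  have hout : ∀ x ∉ K, ∀ y ∈ S, φ (unfoldPt ε x y) = 0 := by
    intro x hx y hy
    refine unfold_zero_of_far hε0 (hSsub hy) (fun hmem => hx ?_)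
    exact Metric.cthickening_mono hε1 _ hmem
  -- measurability
  have hum : Measurable fun p : (Fin 3 → ℝ) × (Fin 3 → ℝ) => φ (unfoldPt ε p.1 p.2) := by
    apply hφc.measurable.comp
    apply measurable_pi_lambda
    intro i
    refine Measurable.add ?_ ?_
    · exact measurable_const.mul
        ((measurable_from_top (f := fun z : ℤ => (z : ℝ))).comp
          ((by fun_prop : Measurable fun p : (Fin 3 → ℝ) × (Fin 3 → ℝ) => p.1 i / ε).floor))
    · exact measurable_const.mul ((measurable_pi_apply i).comp measurable_snd)
  set g : (Fin 3 → ℝ) → ℝ := fun x => ∫ y, φ (unfoldPt ε x y) ∂ν with hgdef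
  have hgm : StronglyMeasurable g := hum.stronglyMeasurable.integral_prod_right'
  -- inner integrability for each x
  have hinner : ∀ x : Fin 3 → ℝ, Integrable (fun y => φ (unfoldPt ε x y)) ν := by
    intro x
    refine Integrable.mono' (integrable_const C) ?_ (Filter.Eventually.of_forall fun y => hC _)
    exact (hφc.comp (continuous_pi fun i =>
      continuous_const.add (continuous_const.mul (continuous_apply i)))).aestronglyMeasurable
  have hgzero : ∀ x ∉ K, g x = 0 := by
    intro x hx
    refine integral_eq_zero_of_ae ?_
    filter_upwards [ae_restrict_mem hSmeas] with y hy
    exact hout x hx y hy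
  -- integrability of g
  have hgint : Integrable g volume := by
    refine Integrable.mono' (g := K.indicator fun _ => C * c)
      ((integrableOn_const hKvol.ne).integrable_indicator hKmeas)
      hgm.aestronglyMeasurable (Filter.Eventually.of_forall fun x => ?_)
    by_cases hx : x ∈ K
    · rw [Set.indicator_of_mem hx]
      calc ‖g x‖ ≤ C * (ν Set.univ).toReal :=
            norm_integral_le_of_norm_le_const (Filter.Eventually.of_forall fun y => hC _)
        _ = C * c := by rw [hνuniv]
    · rw [Set.indicator_of_notMem hx, hgzero x hx, norm_zero]
  -- the difference function
  have hsub : ∀ x, g x - c * φ x = ∫ y, (φ (unfoldPt ε x y) - φ x) ∂ν := by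
    intro x
    rw [integral_sub (hinner x) (integrable_const _), integral_const, measureReal_def, hνuniv, smul_eq_mul]
  have hbound : ∀ x, ‖g x - c * φ x‖ ≤ Set.indicator K (fun _ => c * η') x := by
    intro x
    by_cases hx : x ∈ K
    · rw [Set.indicator_of_mem hx, hsub]
      calc ‖∫ y, (φ (unfoldPt ε x y) - φ x) ∂ν‖ ≤ η' * (ν Set.univ).toReal := by
            refine norm_integral_le_of_norm_le_const ?_
            filter_upwards [ae_restrict_mem hSmeas] with y hy
            exact hdist x y hy
        _ = c * η' := by rw [hνuniv, mul_comm]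
    · have hφx : φ x = 0 := by
        by_contra h
        exact hx (Metric.self_subset_cthickening _ (subset_tsupport φ h))
      rw [Set.indicator_of_notMem hx, hgzero x hx, hφx, mul_zero, sub_zero, norm_zero]
  have hdiffint : Integrable (fun x => g x - c * φ x) volume := hgint.sub (hφint.const_mul c)
  -- final bound
  have hkey : dist (∫ x, g x ∂volume) (c * ∫ x, φ x ∂volume) < η := by
    rw [Real.dist_eq, ← integral_const_mul, ← integral_sub hgint (hφint.const_mul c)]
    calc |∫ x, (g x - c * φ x) ∂volume| ≤ ∫ x, Set.indicator K (fun _ => c * η') x ∂volume := by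
          refine norm_integral_le_of_norm_le
            ((integrableOn_const hKvol.ne).integrable_indicator hKmeas)
            (Filter.Eventually.of_forall hbound)
      _ = V * (c * η') := by
          rw [integral_indicator_const _ hKmeas, smul_eq_mul, measureReal_def]
      _ < η := by
          have h1 : c * V < c * V + 1 := lt_add_one _
          have h2 : η' * (c * V + 1) = η := div_mul_cancel₀ _ (by positivity)
          nlinarith [mul_lt_mul_of_pos_left h1 hη'pos]
  exact hkey
end
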